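/- Let N, M, D, L be integers with N ≥ 1, 1 ≤ M ≤ D, M + D ≤ N and L ≥ 0, and let Δ₁ > 0, ε ∈ (0,1), κ > 0. Suppose V : ℝ² × [τ₁,∞) → ℝ is C¹ and for every τ ≥ τ₁ and every (ρ,φ) with W₀(ρ,φ,τ₁) ≤ Δ₁² one has (1−ε) W₀(ρ,φ,τ) ≤ V(ρ,φ,τ) ≤ (1+ε) W₀(ρ,φ,τ) and 𝒟V(ρ,φ,τ) ≥ κ τ^{−(M+D)/N} V(ρ,φ,τ). Then every solution (ρ(τ),φ(τ)) defined on all of [τ₁,∞) with 0 < W₀(ρ(τ₁),φ(τ₁),τ₁) ≤ Δ₁² leaves the region: there exists τ₃ > τ₁ with W₀(ρ(τ₃),φ(τ₃),τ₁) > Δ₁². In particular, the zero solution is unstable. -/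

import Mathlib

open Real

/-- `W₀(ρ,φ,τ) = (Q ρ² + τ^{−L/N} λ₀ φ²)/2`. -/
noncomputable def W0 (Q lam0 : ℝ) (N L : ℕ) (ρ φ τ : ℝ) : ℝ :=
  (Q * ρ ^ 2 + τ ^ (-(L : ℝ) / (N : ℝ)) * lam0 * φ ^ 2) / 2

/-- Derivative of `V` along the system `dρ/dτ = τ^{−M/N} A(ρ,φ,τ)`,
`dφ/dτ = τ^{−M/N} B(ρ,φ,τ)`:
`𝒟V = ∂_τV + τ^{−M/N}(A ∂_ρV + B ∂_φV)`. -/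
noncomputable def DV (N M : ℕ) (A B V : ℝ → ℝ → ℝ → ℝ) (ρ φ τ : ℝ) : ℝ :=
  deriv (fun t => V ρ φ t) τ +
    τ ^ (-(M : ℝ) / (N : ℝ)) *
      (A ρ φ τ * deriv (fun r => V r φ τ) ρ + B ρ φ τ * deriv (fun p => V ρ p τ) φ)

/-- A solution on `[τ₁,∞)` of the planar system
`dρ/dτ = τ^{−M/N} A(ρ,φ,τ)`, `dφ/dτ = τ^{−M/N} B(ρ,φ,τ)`. -/
def IsSolution (N M : ℕ) (A B : ℝ → ℝ → ℝ → ℝ) (τ₁ : ℝ) (ρ φ : ℝ → ℝ) : Prop :=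
  ∀ τ ≥ τ₁, HasDerivAt ρ (τ ^ (-(M : ℝ) / (N : ℝ)) * A (ρ τ) (φ τ) τ) τ ∧
    HasDerivAt φ (τ ^ (-(M : ℝ) / (N : ℝ)) * B (ρ τ) (φ τ) τ) τ

/-! If a solution stayed in the region `W₀(·,·,τ₁) ≤ Δ₁²` for all `τ ≥ τ₁`, then
`v(τ) = V(ρ(τ), φ(τ), τ)` would stay below `(1 + ε) Δ₁²`, because `W₀` decreases in `τ`.
On the other hand `M + D ≤ N` and `τ ≥ 1` turn the growth condition into `v' ≥ κ v / τ`,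
so `v τ^{-κ}` is nondecreasing and `v ≥ c τ^κ` with `c > 0`, since
`v(τ₁) ≥ (1 - ε) W₀ > 0`. -/

open Set Filter

section Growth

variable {v v' : ℝ → ℝ} {t₀ κ : ℝ}

theorem monotoneOn_mul_rpow_neg_of_le_deriv (ht₀ : 0 < t₀)
    (hv : ∀ t ≥ t₀, HasDerivAt v (v' t) t) (hgrowth : ∀ t ≥ t₀, κ * t⁻¹ * v t ≤ v' t) :
    MonotoneOn (fun t => v t * t ^ (-κ)) (Ici t₀) := by
  have hderiv : ∀ t ≥ t₀, HasDerivAt (fun t => v t * t ^ (-κ))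
      (v' t * t ^ (-κ) + v t * (-κ * t ^ (-κ - 1))) t := fun t ht =>
    (hv t ht).mul (Real.hasDerivAt_rpow_const (Or.inl (ht₀.trans_le ht).ne'))
  refine monotoneOn_of_hasDerivWithinAt_nonneg (convex_Ici t₀)
    (fun t ht => (hderiv t ht).continuousAt.continuousWithinAt)
    (fun t ht => (hderiv t (interior_subset ht)).hasDerivWithinAt) fun t ht => ?_
  have ht : t₀ ≤ t := interior_subset ht
  have htpos : 0 < t := ht₀.trans_le ht
  have hsplit : t ^ (-κ - 1) = t ^ (-κ) * t⁻¹ := by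
    rw [Real.rpow_sub htpos, Real.rpow_one, div_eq_mul_inv]
  -- the derivative is `t ^ (-κ) * (v' t - κ t⁻¹ v t)`
  rw [hsplit]
  nlinarith [mul_le_mul_of_nonneg_left (hgrowth t ht) (Real.rpow_pos_of_pos htpos (-κ)).le]

theorem tendsto_atTop_of_le_deriv (ht₀ : 0 < t₀) (hκ : 0 < κ) (hpos : 0 < v t₀)
    (hv : ∀ t ≥ t₀, HasDerivAt v (v' t) t) (hgrowth : ∀ t ≥ t₀, κ * t⁻¹ * v t ≤ v' t) :
    Tendsto v atTop atTop := by
  have hc : 0 < v t₀ * t₀ ^ (-κ) := mul_pos hpos (Real.rpow_pos_of_pos ht₀ _)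
  refine tendsto_atTop_mono' atTop ?_ (Tendsto.const_mul_atTop hc (tendsto_rpow_atTop hκ))
  filter_upwards [eventually_ge_atTop t₀] with t ht
  have htpos : 0 < t := ht₀.trans_le ht
  have hmono := monotoneOn_mul_rpow_neg_of_le_deriv ht₀ hv hgrowth self_mem_Ici ht ht
  calc v t₀ * t₀ ^ (-κ) * t ^ κ ≤ v t * t ^ (-κ) * t ^ κ := by gcongr
    _ = v t := by rw [mul_assoc, ← Real.rpow_add htpos, neg_add_cancel, Real.rpow_zero, mul_one]

end Growth

theorem hasDerivAt_comp_curve {V : ℝ → ℝ → ℝ → ℝ} {x y : ℝ → ℝ} {x' y' τ : ℝ}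
    (hV : DifferentiableAt ℝ (fun p : ℝ × ℝ × ℝ => V p.1 p.2.1 p.2.2) (x τ, y τ, τ))
    (hx : HasDerivAt x x' τ) (hy : HasDerivAt y y' τ) :
    HasDerivAt (fun t => V (x t) (y t) t)
      (deriv (fun t => V (x τ) (y τ) t) τ + x' * deriv (fun r => V r (y τ) τ) (x τ) +
        y' * deriv (fun p => V (x τ) p τ) (y τ)) τ := by
  set f := fderiv ℝ (fun p : ℝ × ℝ × ℝ => V p.1 p.2.1 p.2.2) (x τ, y τ, τ)
  have hf := hV.hasFDerivAt
  have hτ : deriv (fun t => V (x τ) (y τ) t) τ = f (0, 0, 1) := by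
    have hline : HasDerivAt (fun t => ((x τ, y τ, t) : ℝ × ℝ × ℝ)) (0, 0, 1) τ :=
      (hasDerivAt_const τ _).prodMk ((hasDerivAt_const τ _).prodMk (hasDerivAt_id τ))
    exact (hf.comp_hasDerivAt τ hline).deriv
  have hρ : deriv (fun r => V r (y τ) τ) (x τ) = f (1, 0, 0) := by
    have hline : HasDerivAt (fun r => ((r, y τ, τ) : ℝ × ℝ × ℝ)) (1, 0, 0) (x τ) :=
      (hasDerivAt_id _).prodMk ((hasDerivAt_const _ _).prodMk (hasDerivAt_const _ _))
    exact (hf.comp_hasDerivAt _ hline).deriv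
  have hφ : deriv (fun p => V (x τ) p τ) (y τ) = f (0, 1, 0) := by
    have hline : HasDerivAt (fun p => ((x τ, p, τ) : ℝ × ℝ × ℝ)) (0, 1, 0) (y τ) :=
      (hasDerivAt_const _ _).prodMk ((hasDerivAt_id _).prodMk (hasDerivAt_const _ _))
    exact (hf.comp_hasDerivAt _ hline).deriv
  have hdecomp : ((x', y', 1) : ℝ × ℝ × ℝ) =
      x' • ((1, 0, 0) : ℝ × ℝ × ℝ) + y' • (0, 1, 0) + (0, 0, 1) := by
    simp
  have hline : HasDerivAt (fun t => ((x t, y t, t) : ℝ × ℝ × ℝ)) (x', y', 1) τ :=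
    hx.prodMk (hy.prodMk (hasDerivAt_id τ))
  have hcurve := hf.comp_hasDerivAt τ hline
  rw [hdecomp, map_add, map_add, map_smul, map_smul, smul_eq_mul, smul_eq_mul] at hcurve
  rw [hτ, hρ, hφ]
  exact hcurve.congr_deriv (by ring)

theorem IsSolution.hasDerivAt_DV {N M : ℕ} {A B V : ℝ → ℝ → ℝ → ℝ} {τ₁ : ℝ} {ρ φ : ℝ → ℝ}
    (hsol : IsSolution N M A B τ₁ ρ φ)
    (hV : Differentiable ℝ fun p : ℝ × ℝ × ℝ => V p.1 p.2.1 p.2.2) {τ : ℝ} (hτ : τ ≥ τ₁) :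
    HasDerivAt (fun t => V (ρ t) (φ t) t) (DV N M A B V (ρ τ) (φ τ) τ) τ := by
  convert hasDerivAt_comp_curve (hV _) (hsol τ hτ).1 (hsol τ hτ).2 using 1
  rw [DV]
  ring

section W0

variable {Q lam0 : ℝ} {N L : ℕ}

theorem W0_nonneg (hQ : 0 ≤ Q) (hlam0 : 0 ≤ lam0) {τ : ℝ} (hτ : 0 ≤ τ) (ρ φ : ℝ) :
    0 ≤ W0 Q lam0 N L ρ φ τ := by
  unfold W0
  have := Real.rpow_nonneg hτ (-(L : ℝ) / N)
  positivity

theorem W0_antitone (hlam0 : 0 ≤ lam0) (ρ φ : ℝ) {τ τ' : ℝ} (hτ : 0 < τ) (hle : τ ≤ τ') :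
    W0 Q lam0 N L ρ φ τ' ≤ W0 Q lam0 N L ρ φ τ := by
  have hexp : -(L : ℝ) / N ≤ 0 := div_nonpos_of_nonpos_of_nonneg (by simp) (by simp)
  have hrpow := Real.rpow_le_rpow_of_nonpos hτ hle hexp
  unfold W0
  gcongr

end W0

theorem inv_le_rpow_neg_div {a n τ : ℝ} (ha : a ≤ n) (hn : 0 ≤ n) (hτ : 1 ≤ τ) :
    τ⁻¹ ≤ τ ^ (-a / n) := by
  rw [← Real.rpow_neg_one]
  refine Real.rpow_le_rpow_of_exponent_le hτ ?_
  rcases hn.eq_or_lt with rfl | hn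
  · simp
  · rw [le_div_iff₀ hn]
    linarith

theorem statement11_general (Q lam0 : ℝ) (hQ : 0 < Q) (hlam0 : 0 < lam0)
    (N M D L : ℕ) (hMDN : M + D ≤ N)
    (τ₁ : ℝ) (hτ₁ : 1 ≤ τ₁)
    (A B : ℝ → ℝ → ℝ → ℝ)
    (Δ₁ ε κ : ℝ) (hε : ε ∈ Set.Ioo (0 : ℝ) 1) (hκ : 0 < κ)
    (V : ℝ → ℝ → ℝ → ℝ)
    (hV : ContDiff ℝ 1 fun p : ℝ × ℝ × ℝ => V p.1 p.2.1 p.2.2)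
    (hsand : ∀ τ ≥ τ₁, ∀ ρ φ : ℝ, W0 Q lam0 N L ρ φ τ₁ ≤ Δ₁ ^ 2 →
      (1 - ε) * W0 Q lam0 N L ρ φ τ ≤ V ρ φ τ ∧ V ρ φ τ ≤ (1 + ε) * W0 Q lam0 N L ρ φ τ)
    (hgrow : ∀ τ ≥ τ₁, ∀ ρ φ : ℝ, W0 Q lam0 N L ρ φ τ₁ ≤ Δ₁ ^ 2 →
      κ * τ ^ (-((M : ℝ) + (D : ℝ)) / (N : ℝ)) * V ρ φ τ ≤ DV N M A B V ρ φ τ) :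
    ∀ ρ φ : ℝ → ℝ, IsSolution N M A B τ₁ ρ φ →
      0 < W0 Q lam0 N L (ρ τ₁) (φ τ₁) τ₁ →
      W0 Q lam0 N L (ρ τ₁) (φ τ₁) τ₁ ≤ Δ₁ ^ 2 →
      ∃ τ₃ > τ₁, Δ₁ ^ 2 < W0 Q lam0 N L (ρ τ₃) (φ τ₃) τ₁ := by
  intro ρ φ hsol h0 h1
  by_contra! hstay
  have hτ₁pos : 0 < τ₁ := one_pos.trans_le hτ₁
  have hreg : ∀ τ ≥ τ₁, W0 Q lam0 N L (ρ τ) (φ τ) τ₁ ≤ Δ₁ ^ 2 := fun τ hτ =>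
    hτ.eq_or_lt.elim (fun h => h ▸ h1) (hstay τ)
  set v := fun t => V (ρ t) (φ t) t
  have hv_pos : 0 < v τ₁ := (mul_pos (sub_pos.2 hε.2) h0).trans_le (hsand τ₁ le_rfl _ _ h1).1
  have hv_nonneg : ∀ τ ≥ τ₁, 0 ≤ v τ := fun τ hτ =>
    (mul_nonneg (sub_pos.2 hε.2).le (W0_nonneg hQ.le hlam0.le (by linarith) _ _)).trans
      (hsand τ hτ _ _ (hreg τ hτ)).1
  have hv_le : ∀ τ ≥ τ₁, v τ ≤ (1 + ε) * Δ₁ ^ 2 := fun τ hτ =>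
    (hsand τ hτ _ _ (hreg τ hτ)).2.trans <| mul_le_mul_of_nonneg_left
      ((W0_antitone hlam0.le _ _ hτ₁pos hτ).trans (hreg τ hτ)) (by linarith [hε.1])
  have hgrowth : ∀ τ ≥ τ₁, κ * τ⁻¹ * v τ ≤ DV N M A B V (ρ τ) (φ τ) τ := fun τ hτ => by
    refine le_trans ?_ (hgrow τ hτ _ _ (hreg τ hτ))
    have hexp := inv_le_rpow_neg_div (a := (M : ℝ) + D) (by exact_mod_cast hMDN)
      N.cast_nonneg (hτ₁.trans hτ)
    have := hv_nonneg τ hτ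
    gcongr
  have hv_unbounded := tendsto_atTop_of_le_deriv hτ₁pos hκ hv_pos
    (fun τ hτ => hsol.hasDerivAt_DV (hV.differentiable one_ne_zero) hτ) hgrowth
  obtain ⟨τ, hτ_big, hτ⟩ :=
    ((hv_unbounded.eventually_gt_atTop _).and (eventually_ge_atTop τ₁)).exists
  exact (hτ_big.trans_le (hv_le τ hτ)).false

/-- instability, case `γ_D > 0`: If `V` is sandwiched between `(1±ε) W₀`
and satisfies `𝒟V ≥ κ τ^{−(M+D)/N} V` on the region `{W₀(·,·,τ₁) ≤ Δ₁²}` (with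
`M ≤ D`, `M + D ≤ N`, `κ > 0`), then every solution on `[τ₁,∞)` starting with
`0 < W₀(ρ(τ₁),φ(τ₁),τ₁) ≤ Δ₁²` leaves the region: there is `τ₃ > τ₁` with
`W₀(ρ(τ₃),φ(τ₃),τ₁) > Δ₁²`. In particular the zero solution is unstable. -/
theorem statement11 (Q lam0 : ℝ) (hQ : 0 < Q) (hlam0 : 0 < lam0)
    (N M D L : ℕ) (hN : 1 ≤ N) (hM : 1 ≤ M) (hMD : M ≤ D) (hMDN : M + D ≤ N)
    (τ₁ : ℝ) (hτ₁ : 1 ≤ τ₁)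
    (A B : ℝ → ℝ → ℝ → ℝ)
    (hA : Continuous fun p : ℝ × ℝ × ℝ => A p.1 p.2.1 p.2.2)
    (hB : Continuous fun p : ℝ × ℝ × ℝ => B p.1 p.2.1 p.2.2)
    (hA0 : ∀ τ ≥ τ₁, A 0 0 τ = 0) (hB0 : ∀ τ ≥ τ₁, B 0 0 τ = 0)
    (Δ₁ ε κ : ℝ) (hΔ₁ : 0 < Δ₁) (hε : ε ∈ Set.Ioo (0 : ℝ) 1) (hκ : 0 < κ)
    (V : ℝ → ℝ → ℝ → ℝ)
    (hV : ContDiff ℝ 1 fun p : ℝ × ℝ × ℝ => V p.1 p.2.1 p.2.2)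
    (hsand : ∀ τ ≥ τ₁, ∀ ρ φ : ℝ, W0 Q lam0 N L ρ φ τ₁ ≤ Δ₁ ^ 2 →
      (1 - ε) * W0 Q lam0 N L ρ φ τ ≤ V ρ φ τ ∧ V ρ φ τ ≤ (1 + ε) * W0 Q lam0 N L ρ φ τ)
    (hgrow : ∀ τ ≥ τ₁, ∀ ρ φ : ℝ, W0 Q lam0 N L ρ φ τ₁ ≤ Δ₁ ^ 2 →
      κ * τ ^ (-((M : ℝ) + (D : ℝ)) / (N : ℝ)) * V ρ φ τ ≤ DV N M A B V ρ φ τ) :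
    ∀ ρ φ : ℝ → ℝ, IsSolution N M A B τ₁ ρ φ →
      0 < W0 Q lam0 N L (ρ τ₁) (φ τ₁) τ₁ →
      W0 Q lam0 N L (ρ τ₁) (φ τ₁) τ₁ ≤ Δ₁ ^ 2 →
      ∃ τ₃ > τ₁, Δ₁ ^ 2 < W0 Q lam0 N L (ρ τ₃) (φ τ₃) τ₁ :=
  statement11_general Q lam0 hQ hlam0 N M D L hMDN τ₁ hτ₁ A B Δ₁ ε κ hε hκ V hV hsand hgrow
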